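/- Let G be a connected weighted graph on n ≥ 2 vertices with Laplacian L, and let b ∈ ℝ^n satisfy bᵀ𝟙 = 0. Then the matrix-valued function ε ↦ (L + ε b bᵀ)⁺ has right derivative at ε = 0 equal to −L⁺ b bᵀ L⁺; that is, lim_{ε → 0⁺} (1/ε)·[(L + ε b bᵀ)⁺ − L⁺] = −L⁺ b bᵀ L⁺. -/
import Mathlib


open Matrix BigOperators Polynomial Filter Topology

/-- The four Penrose conditions characterizing the Moore–Penrose pseudoinverse. -/
def IsMoorePenrose {m k : Type*} [Fintype m] [Fintype k] (M : Matrix m k ℝ)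
    (P : Matrix k m ℝ) : Prop :=
  M * P * M = M ∧ P * M * P = P ∧ (M * P)ᵀ = M * P ∧ (P * M)ᵀ = P * M

/- The Moore–Penrose pseudoinverse `M⁺`: it always exists and is unique, so this
choice-based definition picks out exactly the Moore–Penrose pseudoinverse. -/
open Classical in
noncomputable def pinv {m k : Type*} [Fintype m] [Fintype k] (M : Matrix m k ℝ) :
    Matrix k m ℝ :=
  if h : ∃ P, IsMoorePenrose M P then h.choose else 0

/-- The Laplacian `L = D - A` of the weighted graph with adjacency matrix `A`. -/
noncomputable def lapl {n : ℕ} (A : Matrix (Fin n) (Fin n) ℝ) : Matrix (Fin n) (Fin n) ℝ :=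
  Matrix.diagonal (fun u => ∑ v, A u v) - A

/-- Connectivity of the weighted graph with adjacency matrix `A`: the simple graph with an
edge `{u,v}` whenever `A u v > 0` is connected. -/
def AdjConnected {n : ℕ} (A : Matrix (Fin n) (Fin n) ℝ) : Prop :=
  (SimpleGraph.fromRel fun u v => 0 < A u v).Connected

/-- The effective resistance `r_G(u,v) = χ_{u,v}ᵀ L⁺ χ_{u,v}` where `χ_{u,v} = e_u - e_v`. -/
noncomputable def effRes {n : ℕ} (A : Matrix (Fin n) (Fin n) ℝ) (u v : Fin n) : ℝ :=
  (Pi.single u 1 - Pi.single v 1) ⬝ᵥ (pinv (lapl A) *ᵥ (Pi.single u 1 - Pi.single v 1))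

lemma mp_unique {m k : Type*} [Fintype m] [Fintype k] {M : Matrix m k ℝ} {P Q : Matrix k m ℝ}
    (hP : IsMoorePenrose M P) (hQ : IsMoorePenrose M Q) : P = Q := by
  obtain ⟨hP1, hP2, hP3, hP4⟩ := hP
  obtain ⟨hQ1, hQ2, hQ3, hQ4⟩ := hQ
  have hMP : M * P = M * Q := by
    calc M * P = (M * Q * M) * P := by rw [hQ1]
    _ = (M * Q) * (M * P) := by rw [Matrix.mul_assoc]
    _ = (M * Q)ᵀ * (M * P)ᵀ := by rw [hQ3, hP3]
    _ = Qᵀ * (M * P * M)ᵀ := by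
        simp only [Matrix.transpose_mul, Matrix.mul_assoc]
    _ = Qᵀ * Mᵀ := by rw [hP1]
    _ = (M * Q)ᵀ := by rw [Matrix.transpose_mul]
    _ = M * Q := hQ3
  have hPM : P * M = Q * M := by
    calc P * M = P * (M * Q * M) := by rw [hQ1]
    _ = (P * M) * (Q * M) := by simp only [Matrix.mul_assoc]
    _ = (P * M)ᵀ * (Q * M)ᵀ := by rw [hQ4, hP4]
    _ = (M * P * M)ᵀ * Qᵀ := by
        simp only [Matrix.transpose_mul, Matrix.mul_assoc]
    _ = Mᵀ * Qᵀ := by rw [hP1]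
    _ = (Q * M)ᵀ := by rw [Matrix.transpose_mul]
    _ = Q * M := hQ4
  calc P = P * M * P := hP2.symm
  _ = P * M * Q := by rw [Matrix.mul_assoc, hMP, ← Matrix.mul_assoc]
  _ = Q * M * Q := by rw [hPM]
  _ = Q := hQ2

noncomputable def Kmat (n : ℕ) : Matrix (Fin n) (Fin n) ℝ := Matrix.of fun _ _ => (n : ℝ)⁻¹

lemma pinv_eq {m k : Type*} [Fintype m] [Fintype k] {M : Matrix m k ℝ} {P : Matrix k m ℝ}
    (hP : IsMoorePenrose M P) : pinv M = P := by
  rw [pinv, dif_pos ⟨P, hP⟩]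
  exact mp_unique (Exists.choose_spec (⟨P, hP⟩ : ∃ P, IsMoorePenrose M P)) hP

lemma main_mp {n : ℕ} (hn : 0 < n) (S : Matrix (Fin n) (Fin n) ℝ)
    (hS : Sᵀ = S) (hrow : ∀ u, ∑ v, S u v = 0)
    (hpsd : ∀ x, 0 ≤ x ⬝ᵥ S *ᵥ x)
    (hker : ∀ x, x ⬝ᵥ S *ᵥ x = 0 → ∑ i, x i = 0 → x = 0) :
    IsUnit (S + Kmat n).det ∧ pinv S = (S + Kmat n)⁻¹ - Kmat n := by
  have hn' : (n : ℝ) ≠ 0 := Nat.cast_ne_zero.mpr hn.ne'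
  set K := Kmat n with hK
  have hcol : ∀ v, ∑ u, S u v = 0 := by
    intro v
    have := hrow v
    calc ∑ u, S u v = ∑ u, Sᵀ v u := by simp [Matrix.transpose_apply]
    _ = ∑ u, S v u := by rw [hS]
    _ = 0 := hrow v
  have hSK : S * K = 0 := by
    ext u v
    simp [hK, Kmat, Matrix.mul_apply, ← Finset.sum_mul, hrow u]
  have hKS : K * S = 0 := by
    ext u v
    simp [hK, Kmat, Matrix.mul_apply, ← Finset.mul_sum, hcol v]
  have hKK : K * K = K := by
    ext u v
    simp [hK, Kmat, Matrix.mul_apply, Finset.sum_const]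
    field_simp
  have hKT : Kᵀ = K := by ext u v; simp [hK, Kmat]
  set M := S + K with hM
  have hMK : M * K = K := by rw [hM, Matrix.add_mul, hSK, hKK, zero_add]
  have hKM : K * M = K := by rw [hM, Matrix.mul_add, hKS, hKK, zero_add]
  -- quadratic form of K
  have hqK : ∀ z : Fin n → ℝ, z ⬝ᵥ K *ᵥ z = (n:ℝ)⁻¹ * (∑ i, z i)^2 := by
    intro z
    simp only [hK, Kmat, dotProduct, Matrix.mulVec, Matrix.of_apply, ← Finset.mul_sum]
    rw [← Finset.sum_mul]
    ring
  have hdet : IsUnit M.det := by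
    rw [← Matrix.isUnit_iff_isUnit_det]
    rw [← Matrix.mulVec_injective_iff_isUnit]
    intro x y hxy
    have hz : M *ᵥ (x - y) = 0 := by rw [Matrix.mulVec_sub, hxy, sub_self]
    set z := x - y with hzd
    have h0 : z ⬝ᵥ M *ᵥ z = 0 := by rw [hz, dotProduct_zero]
    rw [hM, Matrix.add_mulVec, dotProduct_add, hqK] at h0
    have h1 : 0 ≤ (n:ℝ)⁻¹ * (∑ i, z i)^2 := by positivity
    have h2 : z ⬝ᵥ S *ᵥ z = 0 := le_antisymm (by linarith [hpsd z]) (hpsd z)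
    have h3 : (∑ i, z i) = 0 := by
      have : (n:ℝ)⁻¹ * (∑ i, z i)^2 = 0 := by linarith [hpsd z]
      have := (mul_eq_zero.mp this).resolve_left (inv_ne_zero hn')
      exact pow_eq_zero_iff (two_ne_zero) |>.mp this
    have := hker z h2 h3
    rwa [hzd, sub_eq_zero] at this
  have hMF : M * M⁻¹ = 1 := Matrix.mul_nonsing_inv M hdet
  have hFM : M⁻¹ * M = 1 := Matrix.nonsing_inv_mul M hdet
  set F := M⁻¹ with hF
  have hFK : F * K = K := by
    calc F * K = F * (M * K) := by rw [hMK]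
    _ = (F * M) * K := by rw [Matrix.mul_assoc]
    _ = K := by rw [hFM, Matrix.one_mul]
  have hKF : K * F = K := by
    calc K * F = (K * M) * F := by rw [hKM]
    _ = K * (M * F) := by rw [Matrix.mul_assoc]
    _ = K := by rw [hMF, Matrix.mul_one]
  set P := F - K with hP
  have hSM : S = M - K := by rw [hM, add_sub_cancel_right]
  have hSP : S * P = 1 - K := by
    rw [hSM, hP]
    have expand : (M - K) * (F - K) = M * F - M * K - K * F + K * K := by noncomm_ring
    rw [expand, hMF, hMK, hKF, hKK]
    abel
  have hPS : P * S = 1 - K := by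
    rw [hSM, hP]
    have expand : (F - K) * (M - K) = F * M - F * K - K * M + K * K := by noncomm_ring
    rw [expand, hFM, hFK, hKM, hKK]
    abel
  have hmp : IsMoorePenrose S P := by
    refine ⟨?_, ?_, ?_, ?_⟩
    · rw [hSP, Matrix.sub_mul, Matrix.one_mul, hKS, sub_zero]
    · rw [hPS, Matrix.sub_mul, Matrix.one_mul, hP, Matrix.mul_sub, hKF, hKK, sub_self, sub_zero]
    · rw [hSP, Matrix.transpose_sub, Matrix.transpose_one, hKT]
    · rw [hPS, Matrix.transpose_sub, Matrix.transpose_one, hKT]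
  exact ⟨hdet, pinv_eq hmp⟩

lemma lapl_transpose {n : ℕ} {A : Matrix (Fin n) (Fin n) ℝ} (hsymm : A.IsSymm) :
    (lapl A)ᵀ = lapl A := by
  rw [lapl, Matrix.transpose_sub, Matrix.diagonal_transpose, hsymm.eq]

lemma lapl_row {n : ℕ} (A : Matrix (Fin n) (Fin n) ℝ) (u : Fin n) :
    ∑ v, lapl A u v = 0 := by
  simp [lapl, Matrix.sub_apply, Matrix.diagonal_apply, Finset.sum_sub_distrib,
    Finset.sum_ite_eq, Finset.mem_univ]

lemma lapl_energy {n : ℕ} {A : Matrix (Fin n) (Fin n) ℝ} (hsymm : A.IsSymm) (x : Fin n → ℝ) :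
    x ⬝ᵥ lapl A *ᵥ x = (1/2) * ∑ u, ∑ v, A u v * (x u - x v)^2 := by
  have hswap : ∑ u, ∑ v, A u v * (x u)^2 = ∑ u, ∑ v, A u v * (x v)^2 := by
    rw [Finset.sum_comm]
    refine Finset.sum_congr rfl fun u _ => Finset.sum_congr rfl fun v _ => ?_
    rw [hsymm.apply u v]
  have key : x ⬝ᵥ lapl A *ᵥ x
      = (∑ u, ∑ v, A u v * (x u)^2) - ∑ u, ∑ v, A u v * (x u * x v) := by
    simp only [dotProduct, Matrix.mulVec, lapl, Matrix.sub_apply, Matrix.diagonal_apply,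
      sub_mul, ite_mul, zero_mul, Finset.sum_sub_distrib, Finset.sum_ite_eq,
      Finset.mem_univ, if_true, mul_sub, Finset.mul_sum]
    congr 1
    · refine Finset.sum_congr rfl fun u _ => ?_
      rw [Finset.sum_mul, Finset.mul_sum]
      exact Finset.sum_congr rfl fun v _ => by ring
    · exact Finset.sum_congr rfl fun u _ => Finset.sum_congr rfl fun v _ => by ring
  have h2 : ∑ u, ∑ v, A u v * (x u - x v)^2
      = (∑ u, ∑ v, A u v * (x u)^2) + (∑ u, ∑ v, A u v * (x v)^2)
        - 2 * ∑ u, ∑ v, A u v * (x u * x v) := by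
    have e : ∀ u v : Fin n, A u v * (x u - x v)^2
        = (A u v * (x u)^2 + A u v * (x v)^2) - 2 * (A u v * (x u * x v)) := fun u v => by ring
    simp_rw [e, Finset.sum_sub_distrib, Finset.sum_add_distrib, ← Finset.mul_sum]
  rw [key, h2, ← hswap]
  ring

lemma energy_zero_const {n : ℕ} {A : Matrix (Fin n) (Fin n) ℝ}
    (hsymm : A.IsSymm) (hnonneg : ∀ u v, 0 ≤ A u v) (hconn : AdjConnected A)
    {x : Fin n → ℝ} (h : ∑ u, ∑ v, A u v * (x u - x v)^2 = 0) :
    ∀ u v, x u = x v := by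
  have hterm : ∀ u v : Fin n, A u v * (x u - x v)^2 = 0 := by
    intro u v
    have h1 := (Finset.sum_eq_zero_iff_of_nonneg
      (fun u _ => Finset.sum_nonneg fun v _ => mul_nonneg (hnonneg u v) (sq_nonneg _))).mp
      h u (Finset.mem_univ u)
    exact (Finset.sum_eq_zero_iff_of_nonneg
      (fun v _ => mul_nonneg (hnonneg u v) (sq_nonneg _))).mp h1 v (Finset.mem_univ v)
  have hedge : ∀ u v : Fin n, 0 < A u v → x u = x v := by
    intro u v hA
    have := (mul_eq_zero.mp (hterm u v)).resolve_left hA.ne'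
    have := pow_eq_zero_iff two_ne_zero |>.mp this
    linarith [sub_eq_zero.mp this]
  intro u v
  obtain ⟨w⟩ := hconn.preconnected u v
  induction w with
  | nil => rfl
  | @cons a c d hadj p ih =>
    rw [SimpleGraph.fromRel_adj] at hadj
    rcases hadj.2 with hac | hca
    · rw [hedge a c hac]; exact ih
    · rw [← hedge c a hca]; exact ih

lemma const_eq_zero {n : ℕ} (hn : 0 < n) {x : Fin n → ℝ}
    (hc : ∀ u v, x u = x v) (hs : ∑ i, x i = 0) : x = 0 := by
  funext u
  have : ∑ i, x i = (n : ℝ) * x u := by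
    rw [Finset.sum_congr rfl fun i _ => hc i u]
    simp [Finset.sum_const, nsmul_eq_mul]
  rw [this] at hs
  have hn' : (n : ℝ) ≠ 0 := Nat.cast_ne_zero.mpr hn.ne'
  simpa [hn'] using hs

/-- For a connected weighted graph on `n ≥ 2` vertices with Laplacian
`L` and `b` orthogonal to the all-ones vector, the map `ε ↦ (L + ε b bᵀ)⁺` has right
derivative `-L⁺ b bᵀ L⁺` at `ε = 0`. -/
theorem stmt11 {n : ℕ} (hn : 2 ≤ n) (A : Matrix (Fin n) (Fin n) ℝ)
    (hsymm : A.IsSymm) (hnonneg : ∀ u v, 0 ≤ A u v) (hdiag : ∀ u, A u u = 0)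
    (hconn : AdjConnected A)
    (b : Fin n → ℝ) (hb : ∑ i, b i = 0) :
    Filter.Tendsto
      (fun ε : ℝ =>
        (1 / ε) • (pinv (lapl A + ε • Matrix.vecMulVec b b) - pinv (lapl A)))
      (nhdsWithin 0 (Set.Ioi 0))
      (nhds (-(pinv (lapl A) * Matrix.vecMulVec b b * pinv (lapl A)))) := by
  have hn0 : 0 < n := lt_of_lt_of_le two_pos hn
  set L := lapl A with hL
  set B := Matrix.vecMulVec b b with hB
  set K := Kmat n with hK
  -- quadratic form of B
  have hqB : ∀ x : Fin n → ℝ, x ⬝ᵥ B *ᵥ x = (∑ i, b i * x i)^2 := by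
    intro x
    simp only [hB, dotProduct, Matrix.mulVec, Matrix.vecMulVec_apply, sq]
    rw [Finset.sum_mul_sum]
    exact Finset.sum_congr rfl fun u _ => by
      rw [Finset.mul_sum]
      exact Finset.sum_congr rfl fun v _ => by ring
  have hq : ∀ (ε : ℝ) (x : Fin n → ℝ),
      x ⬝ᵥ (L + ε • B) *ᵥ x = x ⬝ᵥ L *ᵥ x + ε * (∑ i, b i * x i)^2 := by
    intro ε x
    rw [Matrix.add_mulVec, dotProduct_add, Matrix.smul_mulVec,
      dotProduct_smul, hqB x, smul_eq_mul]
  have hLnn : ∀ x : Fin n → ℝ, 0 ≤ x ⬝ᵥ L *ᵥ x := by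
    intro x
    rw [hL, lapl_energy hsymm]
    have : 0 ≤ ∑ u, ∑ v, A u v * (x u - x v)^2 :=
      Finset.sum_nonneg fun u _ => Finset.sum_nonneg fun v _ =>
        mul_nonneg (hnonneg u v) (sq_nonneg _)
    linarith
  -- main structural fact, for every ε ≥ 0
  have hmain : ∀ ε : ℝ, 0 ≤ ε →
      IsUnit (L + ε • B + K).det ∧ pinv (L + ε • B) = (L + ε • B + K)⁻¹ - K := by
    intro ε hε
    refine main_mp hn0 (L + ε • B) ?_ ?_ ?_ ?_
    · have hBT : (vecMulVec b b)ᵀ = vecMulVec b b := by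
        ext u v; simp [Matrix.vecMulVec_apply, mul_comm]
      rw [Matrix.transpose_add, Matrix.transpose_smul, hB, hBT, hL, lapl_transpose hsymm]
    · intro u
      simp only [Matrix.add_apply, Matrix.smul_apply, hB, Matrix.vecMulVec_apply,
        Finset.sum_add_distrib, smul_eq_mul, ← Finset.mul_sum, hb]
      rw [hL, lapl_row]
      ring
    · intro x
      rw [hq]
      have := hLnn x
      have : 0 ≤ ε * (∑ i, b i * x i)^2 := mul_nonneg hε (sq_nonneg _)
      linarith [hLnn x]
    · intro x hx hsum
      rw [hq] at hx
      have h1 : x ⬝ᵥ L *ᵥ x = 0 := by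
        have : 0 ≤ ε * (∑ i, b i * x i)^2 := mul_nonneg hε (sq_nonneg _)
        linarith [hLnn x]
      rw [hL, lapl_energy hsymm x] at h1
      have h2 : ∑ u, ∑ v, A u v * (x u - x v)^2 = 0 := by linarith
      exact const_eq_zero hn0 (energy_zero_const hsymm hnonneg hconn h2) hsum
  -- the perturbed matrix and its inverse
  set g : ℝ → Matrix (Fin n) (Fin n) ℝ := fun ε => L + ε • B + K with hg
  have hdet0 : IsUnit (g 0).det := by
    have := (hmain 0 le_rfl).1; simpa [hg] using this
  have hpinv0 : pinv L = (g 0)⁻¹ - K := by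
    have := (hmain 0 le_rfl).2
    simpa [hg] using this
  -- continuity of ε ↦ (g ε)⁻¹ at 0
  have hgcont : Continuous g := by
    apply Continuous.add ?_ continuous_const
    exact continuous_const.add (continuous_id.smul continuous_const)
  have hinvc : ContinuousAt (fun ε => (g ε)⁻¹) 0 := by
    simp only [Matrix.inv_def, Ring.inverse_eq_inv']
    exact ((hgcont.matrix_det.continuousAt).inv₀ hdet0.ne_zero).smul
      (hgcont.matrix_adjugate.continuousAt)
  -- limit of the model function
  have hten : Filter.Tendsto (fun ε : ℝ => -((g ε)⁻¹ * B * (g 0)⁻¹))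
      (nhdsWithin 0 (Set.Ioi 0)) (nhds (-((g 0)⁻¹ * B * (g 0)⁻¹))) := by
    have h1 : Filter.Tendsto (fun ε : ℝ => (g ε)⁻¹) (nhdsWithin 0 (Set.Ioi 0))
        (nhds ((g 0)⁻¹)) := hinvc.continuousWithinAt
    exact ((h1.mul tendsto_const_nhds).mul tendsto_const_nhds).neg
  -- the target limit equals the model limit
  have hBK : B * K = 0 := by
    ext u v
    simp [hB, hK, Kmat, Matrix.mul_apply, Matrix.vecMulVec_apply, mul_assoc, ← Finset.sum_mul,
      ← Finset.mul_sum, hb]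
  have hKB : K * B = 0 := by
    ext u v
    simp only [hB, hK, Kmat, Matrix.mul_apply, Matrix.vecMulVec_apply, Matrix.of_apply,
      Matrix.zero_apply]
    have e : ∀ k : Fin n, (n:ℝ)⁻¹ * (b k * b v) = b k * ((n:ℝ)⁻¹ * b v) := fun k => by ring
    rw [Finset.sum_congr rfl fun k _ => e k, ← Finset.sum_mul, hb, zero_mul]
  have hlim : -(pinv L * B * pinv L) = -((g 0)⁻¹ * B * (g 0)⁻¹) := by
    rw [hpinv0]
    have e1 : ((g 0)⁻¹ - K) * B = (g 0)⁻¹ * B := by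
      rw [Matrix.sub_mul, hKB, sub_zero]
    rw [e1, Matrix.mul_sub, Matrix.mul_assoc ((g 0)⁻¹) B K, hBK, Matrix.mul_zero, sub_zero]
  rw [show (nhds (-(pinv L * B * pinv L))) = nhds (-((g 0)⁻¹ * B * (g 0)⁻¹)) from by rw [hlim]]
  -- identify the two functions on Set.Ioi 0
  refine Filter.Tendsto.congr' ?_ hten
  filter_upwards [self_mem_nhdsWithin] with ε (hε : 0 < ε)
  have hdetε : IsUnit (g ε).det := (hmain ε hε.le).1
  have hpε : pinv (L + ε • B) = (g ε)⁻¹ - K := (hmain ε hε.le).2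
  have e1 : (g ε)⁻¹ * (g 0) * (g 0)⁻¹ = (g ε)⁻¹ := by
    rw [Matrix.mul_assoc, Matrix.mul_nonsing_inv _ hdet0, Matrix.mul_one]
  have e2 : (g ε)⁻¹ * (g ε) * (g 0)⁻¹ = (g 0)⁻¹ := by
    rw [Matrix.nonsing_inv_mul _ hdetε, Matrix.one_mul]
  have hg0ε : g 0 - g ε = (-ε) • B := by
    simp only [hg, zero_smul, add_zero]
    module
  have ediff : (g ε)⁻¹ - (g 0)⁻¹ = (-ε) • ((g ε)⁻¹ * B * (g 0)⁻¹) := by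
    calc (g ε)⁻¹ - (g 0)⁻¹ = (g ε)⁻¹ * (g 0) * (g 0)⁻¹ - (g ε)⁻¹ * (g ε) * (g 0)⁻¹ := by
          rw [e1, e2]
    _ = (g ε)⁻¹ * (g 0 - g ε) * (g 0)⁻¹ := by
          rw [Matrix.mul_sub, Matrix.sub_mul]
    _ = (-ε) • ((g ε)⁻¹ * B * (g 0)⁻¹) := by
          rw [hg0ε, Matrix.mul_smul, Matrix.smul_mul]
  show -((g ε)⁻¹ * B * (g 0)⁻¹) = (1 / ε) • (pinv (L + ε • B) - pinv L)
  rw [hpε, hpinv0, sub_sub_sub_cancel_right, ediff, smul_smul]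
  rw [show (1 / ε) * (-ε) = -1 from by field_simp]
  rw [neg_one_smul]
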